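/- arXiv:2601.04923 — 9 statements merged into one kernel-verified Lean document; each statement's English description precedes it below -/
import Mathlib

section
/- Let A, B, C, D, q ∈ ℂ with A ≠ 0, B ≠ 0, and 0 < |q| < 1. Suppose f : ℂ → ℂ is an exponential polynomial, i.e. there exist finitely many complex polynomials P_1, Q_1, …, P_k, Q_k such that f(z) = Σ_{j=1}^{k} P_j(z)·exp(Q_j(z)) for all z ∈ ℂ. If f satisfies f'(z) = A·f(qz) + B·f(z)^2 + C·f(z) + D for all z ∈ ℂ, then f is constant. In particular, (†) has no exponential polynomial solutions involving a nonconstant exponent. -/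
/-!
Write `f = ∑ c_Q e^Q` with finitely many distinct exponents `Q` without constant term and nonzero
polynomial coefficients `c_Q`. By Borel's theorem the `e^Q` are linearly independent over `ℂ[z]`,
so `(†)` can be compared exponent by exponent. If some exponent is nonconstant, let `m` be the
largest degree of an exponent and choose an exponent `t` whose `X ^ m`-coefficient has maximal
modulus and which is maximal for a compatible lexicographic order. Then `2t` arises in `f²` only as
`t + t`, and it is neither an exponent of `f` and `f'`, nor of `f (q z)` (whose `X ^ m`-coefficients
are scaled by `q ^ m` with `|q| < 1`), nor `0`. So the coefficient of `e^{2t}` in `(†)` is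
`B c_t² = 0`, a contradiction. Hence `f` is a polynomial, and comparing the coefficients of
`z ^ (2 deg f)` in `(†)` forces `deg f = 0`.
-/

open Complex Polynomial ComplexConjugate

section ExpDeriv

variable {R : Type*} [CommRing R]

noncomputable def expDeriv (Q P : R[X]) : R[X] := derivative P + P * derivative Q

theorem expDeriv_zero_left : expDeriv (0 : R[X]) = derivative := by
  ext1 P; simp [expDeriv]

theorem expDeriv_ne_zero [IsDomain R] {Q P : R[X]} (hQ : derivative Q ≠ 0) (hP : P ≠ 0) :
    expDeriv Q P ≠ 0 := by
  have hlt : (derivative P).degree < (P * derivative Q).degree :=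
    calc (derivative P).degree < P.degree := degree_derivative_lt hP
      _ ≤ P.degree + (derivative Q).degree := le_add_of_nonneg_right (zero_le_degree_iff.mpr hQ)
      _ = (P * derivative Q).degree := degree_mul.symm
  rw [expDeriv, ← degree_ne_bot, degree_add_eq_right_of_degree_lt hlt, degree_ne_bot]
  exact mul_ne_zero hP hQ

theorem iterate_expDeriv_ne_zero [IsDomain R] {Q P : R[X]} (hQ : derivative Q ≠ 0) (hP : P ≠ 0)
    (n : ℕ) : (expDeriv Q)^[n] P ≠ 0 := by
  induction n with
  | zero => exact hP
  | succ n ih => rw [Function.iterate_succ_apply']; exact expDeriv_ne_zero hQ ih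

end ExpDeriv

theorem hasDerivAt_eval_mul_exp_eval (P Q : ℂ[X]) (z : ℂ) :
    HasDerivAt (fun w => P.eval w * exp (Q.eval w)) ((expDeriv Q P).eval z * exp (Q.eval z)) z := by
  refine ((P.hasDerivAt z).fun_mul (Q.hasDerivAt z).cexp).congr_deriv ?_
  rw [expDeriv, eval_add, eval_mul]
  ring

theorem sum_eval_mul_exp_add {ι : Type*} (s : Finset ι) (c e : ι → ℂ[X]) (R : ℂ[X]) (z : ℂ) :
    ∑ i ∈ s, (c i).eval z * exp ((e i + R).eval z) =
      (∑ i ∈ s, (c i).eval z * exp ((e i).eval z)) * exp (R.eval z) := by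
  simp only [eval_add, exp_add, Finset.sum_mul, mul_assoc]

theorem sum_iterate_expDeriv_eq_zero {ι : Type*} (s : Finset ι) (c e : ι → ℂ[X])
    (h : ∀ z, ∑ i ∈ s, (c i).eval z * exp ((e i).eval z) = 0) (n : ℕ) (z : ℂ) :
    ∑ i ∈ s, ((expDeriv (e i))^[n] (c i)).eval z * exp ((e i).eval z) = 0 := by
  induction n generalizing z with
  | zero => exact h z
  | succ n ih =>
    have hderiv := HasDerivAt.fun_sum fun i (_ : i ∈ s) =>
      hasDerivAt_eval_mul_exp_eval ((expDeriv (e i))^[n] (c i)) (e i) z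
    simp only [funext ih] at hderiv
    simpa only [Function.iterate_succ_apply'] using hderiv.unique (hasDerivAt_const z 0)

/-- Borel's theorem on the linear independence of `exp Q` over `ℂ[X]`. -/
theorem eq_zero_of_sum_eval_mul_exp_eq_zero (E : Finset ℂ[X]) (c : ℂ[X] → ℂ[X])
    (hE : (E : Set ℂ[X]).Pairwise fun P Q => derivative (P - Q) ≠ 0)
    (h : ∀ z, ∑ Q ∈ E, (c Q).eval z * exp (Q.eval z) = 0) : ∀ Q ∈ E, c Q = 0 := by
  induction E using Finset.induction_on generalizing c with
  | empty => simp
  | insert t E ht ih =>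
    rw [Finset.coe_insert, Set.pairwise_insert] at hE
    -- after dividing by `exp t`, differentiating `N` times kills the coefficient of `exp 0`
    set N := (c t).natDegree + 1
    have hshift := sum_iterate_expDeriv_eq_zero (insert t E) c (· + -t) (fun z => by
      rw [sum_eval_mul_exp_add, h z, zero_mul]) N
    have hsum : ∀ z, ∑ Q ∈ E, ((expDeriv (Q + -t))^[N] (c Q)).eval z * exp (Q.eval z) = 0 := by
      intro z
      have := sum_eval_mul_exp_add E (fun Q => (expDeriv (Q + -t))^[N] (c Q)) (· + -t) t z
      simp only [neg_add_cancel_right] at this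
      rw [this, ← zero_mul (exp (t.eval z)), ← hshift z, Finset.sum_insert ht, add_neg_cancel,
        expDeriv_zero_left, iterate_derivative_eq_zero (Nat.lt_succ_self _)]
      simp
    have hcE : ∀ Q ∈ E, c Q = 0 := fun Q hQ => by
      by_contra hc
      refine iterate_expDeriv_ne_zero ?_ hc N (ih _ hE.1 hsum Q hQ)
      rw [← sub_eq_add_neg]
      exact (hE.2 Q hQ (ne_of_mem_of_not_mem hQ ht).symm).2
    have hct : c t = 0 := Polynomial.funext fun z => by
      have := h z
      rw [Finset.sum_insert ht,
        Finset.sum_eq_zero fun Q hQ => by rw [hcE Q hQ, eval_zero, zero_mul], add_zero] at this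
      simpa [exp_ne_zero] using this
    simpa [hct] using hcE

/-- Its leading coordinate `re (conj u * Q.coeff m)` is maximal exactly where `Q.coeff m = u`
among polynomials with `‖Q.coeff m‖ ≤ ‖u‖`; the other coordinates make it injective. -/
noncomputable def lexKey (u : ℂ) (m : ℕ) : ℂ[X] →+ Lex (ℕ → ℝ) where
  toFun Q := toLex fun
    | 0 => (conj u * Q.coeff m).re
    | k + 1 => (I ^ (k % 2) * Q.coeff (k / 2)).re
  map_zero' := congrArg toLex <| funext fun k => by cases k <;> simp
  map_add' P Q := congrArg toLex <| funext fun k => by cases k <;> simp [mul_add]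

theorem lexKey_injective (u : ℂ) (m : ℕ) : Function.Injective (lexKey u m) := by
  intro P Q h
  have key k := congrFun (congrArg ofLex h) (k + 1)
  ext d
  exact Complex.ext (by simpa [lexKey] using key (2 * d))
    (by simpa [lexKey, Nat.add_mod, Nat.add_div] using key (2 * d + 1))

theorem exists_extreme_of_max_norm_coeff (S : Finset ℂ[X]) (hS : S.Nonempty) (m : ℕ) :
    ∃ t ∈ S, (∀ Q ∈ S, ‖Q.coeff m‖ ≤ ‖t.coeff m‖) ∧
      ∀ a ∈ S, ∀ b ∈ S, a + b = t + t → a = t ∧ b = t := by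
  obtain ⟨Q₀, hQ₀, hQ₀max⟩ := S.exists_max_image (fun Q => ‖Q.coeff m‖) hS
  set u := Q₀.coeff m with hu
  obtain ⟨t, ht, htmax⟩ := S.exists_max_image (lexKey u m) hS
  refine ⟨t, ht, fun Q hQ => ?_, fun a ha b hb hab => ?_⟩
  · have hkey : (conj u * Q₀.coeff m).re ≤ (conj u * t.coeff m).re := by
      simpa [lexKey] using Pi.apply_le_of_toLex (i := 0) (htmax Q₀ hQ₀) (by simp)
    have hre : (conj u * t.coeff m).re ≤ ‖u‖ * ‖t.coeff m‖ := by
      simpa using re_le_norm (conj u * t.coeff m)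
    rw [← hu, conj_mul', ← ofReal_pow, ofReal_re] at hkey
    nlinarith [hQ₀max Q hQ, hQ₀max t ht, norm_nonneg u, norm_nonneg (t.coeff m)]
  · have hkey := (add_eq_add_iff_eq_and_eq (htmax a ha) (htmax b hb)).mp
      (by rw [← map_add, ← map_add, hab])
    exact ⟨lexKey_injective u m hkey.1, lexKey_injective u m hkey.2⟩

theorem exists_top_exponent (S : Finset ℂ[X]) {P : ℂ[X]} (hP : P ∈ S) (hPdeg : P.natDegree ≠ 0)
    {q : ℂ} (hq : ‖q‖ ≤ 1) :
    ∃ t ∈ S, (∀ a ∈ S, ∀ b ∈ S, a + b = t + t → a = t ∧ b = t) ∧ t + t ≠ 0 ∧ t + t ∉ S ∧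
      ∀ Q ∈ S, Q.comp (C q * X) ≠ t + t := by
  set m := S.sup natDegree
  obtain ⟨t, ht, htmax, hext⟩ := exists_extreme_of_max_norm_coeff S ⟨P, hP⟩ m
  have htm : 0 < ‖t.coeff m‖ := by
    obtain ⟨P', hP', hdeg⟩ := S.exists_mem_eq_sup ⟨P, hP⟩ natDegree
    have hP'0 : P' ≠ 0 := by
      rintro rfl
      have := Finset.le_sup (f := natDegree) hP
      rw [hdeg, natDegree_zero] at this
      omega
    refine (norm_pos_iff.mpr ?_).trans_le (htmax P' hP')
    rw [show m = P'.natDegree from hdeg]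
    exact leadingCoeff_ne_zero.mpr hP'0
  -- the coefficient of `X ^ m` in `t + t` is too large to come from a dilate of any `Q ∈ S`
  have hdilate : ∀ Q ∈ S, ∀ r : ℂ, ‖r‖ ≤ 1 → Q.comp (C r * X) ≠ t + t := by
    intro Q hQ r hr hQt
    have hcoeff := congrArg (fun R => ‖R.coeff m‖) hQt
    simp only [comp_C_mul_X_coeff, coeff_add, norm_mul, norm_pow] at hcoeff
    rw [← two_mul, norm_mul, Complex.norm_two] at hcoeff
    nlinarith [htmax Q hQ, pow_le_one₀ (norm_nonneg r) hr (n := m), norm_nonneg (Q.coeff m)]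
  have httm : (t + t).coeff m ≠ 0 := by
    rw [coeff_add, ← two_mul]
    exact mul_ne_zero two_ne_zero (norm_pos_iff.mp htm)
  exact ⟨t, ht, hext, fun h => httm (by rw [h, coeff_zero]),
    fun h => hdilate _ h 1 (by simp) (by simp), fun Q hQ => hdilate Q hQ q hq⟩

theorem natDegree_eq_zero_of_derivative_eq {R : Type*} [CommRing R] [IsDomain R] {p : R[X]}
    {a b c d q : R} (hb : b ≠ 0)
    (h : derivative p = C a * p.comp (C q * X) + C b * p ^ 2 + C c * p + C d) :
    p.natDegree = 0 := by
  by_contra hn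
  -- compare the coefficients of `X ^ (2 * p.natDegree)`
  have hlt : p.natDegree < 2 * p.natDegree := by omega
  have hcoeff := congrArg (coeff · (2 * p.natDegree)) h
  simp only [coeff_add, coeff_C_mul, comp_C_mul_X_coeff, coeff_C, coeff_pow_mul_natDegree,
    coeff_eq_zero_of_natDegree_lt hlt,
    coeff_eq_zero_of_natDegree_lt ((natDegree_derivative_lt hn).trans hlt)] at hcoeff
  have hlc : b * p.leadingCoeff ^ 2 = 0 := by simpa [hn] using hcoeff.symm
  exact hn (by simp [leadingCoeff_eq_zero.mp (by simpa [hb] using hlc)])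

/-- A formal exponential polynomial: `F Q` is the coefficient of `exp Q`. -/
abbrev ExpPoly := ℂ[X] →₀ ℂ[X]

namespace ExpPoly

noncomputable def eval (z : ℂ) : ExpPoly →ₗ[ℂ] ℂ :=
  Finsupp.lsum ℂ fun Q => LinearMap.mulRight ℂ (exp (Q.eval z)) ∘ₗ leval z

theorem eval_apply (z : ℂ) (F : ExpPoly) :
    eval z F = ∑ Q ∈ F.support, (F Q).eval z * exp (Q.eval z) := by
  simp [eval, Finsupp.sum]

@[simp]
theorem eval_single (z : ℂ) (Q P : ℂ[X]) :
    eval z (Finsupp.single Q P) = P.eval z * exp (Q.eval z) := by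
  simp [eval]

noncomputable def normalized : Submodule ℂ ExpPoly :=
  Finsupp.supported ℂ[X] ℂ {Q | Q.coeff 0 = 0}

theorem eq_zero_of_eval_eq_zero {F : ExpPoly} (hF : F ∈ normalized) (h : ∀ z, eval z F = 0) :
    F = 0 := by
  have hpair : (F.support : Set ℂ[X]).Pairwise fun P Q => Polynomial.derivative (P - Q) ≠ 0 := by
    intro P hP Q hQ hPQ hder
    have h0 := eq_C_of_natDegree_eq_zero (derivative_eq_zero.mp hder)
    rw [coeff_sub, hF hP, hF hQ, sub_zero, C_0, sub_eq_zero] at h0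
    exact hPQ h0
  have hzero := eq_zero_of_sum_eval_mul_exp_eq_zero _ F hpair fun z => by rw [← eval_apply, h z]
  ext1 Q
  by_contra hQ
  exact hQ (hzero Q (Finsupp.mem_support_iff.mpr hQ))

noncomputable def derivative (F : ExpPoly) : ExpPoly :=
  ∑ Q ∈ F.support, Finsupp.single Q (expDeriv Q (F Q))

noncomputable def dilate (q : ℂ) (F : ExpPoly) : ExpPoly :=
  ∑ Q ∈ F.support, Finsupp.single (Q.comp (C q * X)) ((F Q).comp (C q * X))

noncomputable def mul (F G : ExpPoly) : ExpPoly :=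
  ∑ r ∈ F.support ×ˢ G.support, Finsupp.single (r.1 + r.2) (F r.1 * G r.2)

theorem hasDerivAt_eval (F : ExpPoly) (z : ℂ) :
    HasDerivAt (fun w => eval w F) (eval z (derivative F)) z := by
  rw [derivative, map_sum]
  simp only [eval_single, eval_apply _ F]
  exact HasDerivAt.fun_sum fun Q _ => hasDerivAt_eval_mul_exp_eval (F Q) Q z

theorem eval_dilate (q z : ℂ) (F : ExpPoly) : eval z (dilate q F) = eval (q * z) F := by
  simp only [dilate, map_sum, eval_single, eval_apply _ F, eval_comp, eval_mul, eval_C, eval_X]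

theorem eval_mul (z : ℂ) (F G : ExpPoly) : eval z (mul F G) = eval z F * eval z G := by
  simp only [mul, map_sum, eval_single, eval_apply _ F, eval_apply _ G, Finset.sum_mul_sum,
    Finset.sum_product, Polynomial.eval_mul, eval_add, exp_add]
  refine Finset.sum_congr rfl fun _ _ => Finset.sum_congr rfl fun _ _ => by ring

theorem sum_single_apply_eq_zero {ι : Type*} (s : Finset ι) (e c : ι → ℂ[X]) {Q : ℂ[X]}
    (h : ∀ i ∈ s, e i ≠ Q) : (∑ i ∈ s, Finsupp.single (e i) (c i)) Q = 0 := by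
  rw [Finsupp.finsetSum_apply]
  exact Finset.sum_eq_zero fun i hi => Finsupp.single_eq_of_ne (h i hi).symm

theorem sum_single_mem_normalized {ι : Type*} (s : Finset ι) (e c : ι → ℂ[X])
    (h : ∀ i ∈ s, (e i).coeff 0 = 0) : ∑ i ∈ s, Finsupp.single (e i) (c i) ∈ normalized :=
  Submodule.sum_mem _ fun i hi => Finsupp.single_mem_supported ℂ _ (h i hi)

theorem derivative_mem_normalized {F : ExpPoly} (hF : F ∈ normalized) : derivative F ∈ normalized :=
  sum_single_mem_normalized _ _ _ fun _ hQ => hF hQ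

theorem dilate_mem_normalized (q : ℂ) {F : ExpPoly} (hF : F ∈ normalized) :
    dilate q F ∈ normalized :=
  sum_single_mem_normalized _ _ _ fun _ hQ => by simpa using hF hQ

theorem mul_mem_normalized {F G : ExpPoly} (hF : F ∈ normalized) (hG : G ∈ normalized) :
    mul F G ∈ normalized :=
  sum_single_mem_normalized _ _ _ fun r hr => by
    rw [Finset.mem_product] at hr
    rw [coeff_add, hF hr.1, hG hr.2, add_zero]

theorem mul_apply_add {F G : ExpPoly} {a b : ℂ[X]} (ha : a ∈ F.support) (hb : b ∈ G.support)
    (h : ∀ a' ∈ F.support, ∀ b' ∈ G.support, a' + b' = a + b → a' = a ∧ b' = b) :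
    mul F G (a + b) = F a * G b := by
  rw [mul, Finsupp.finsetSum_apply, Finset.sum_eq_single (a, b)]
  · simp
  · rintro ⟨a', b'⟩ hr hne
    rw [Finset.mem_product] at hr
    refine Finsupp.single_eq_of_ne fun hab => hne ?_
    obtain ⟨rfl, rfl⟩ := h a' hr.1 b' hr.2 hab.symm
    rfl
  · exact fun h => absurd (Finset.mem_product.mpr ⟨ha, hb⟩) h

theorem exists_mem_normalized_eval_eq {f : ℂ → ℂ}
    (hf : ∃ (k : ℕ) (P Q : Fin k → ℂ[X]),
      ∀ z : ℂ, f z = ∑ j : Fin k, (P j).eval z * exp ((Q j).eval z)) :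
    ∃ F ∈ normalized, ∀ z, f z = eval z F := by
  obtain ⟨k, P, Q, hf⟩ := hf
  refine ⟨∑ j, Finsupp.single (Q j - C ((Q j).coeff 0)) (C (exp ((Q j).coeff 0)) * P j),
    sum_single_mem_normalized _ _ _ fun j _ => by simp, fun z => ?_⟩
  simp only [hf z, map_sum, eval_single, Polynomial.eval_mul, eval_sub, eval_C, exp_sub]
  refine Finset.sum_congr rfl fun j _ => ?_
  field_simp

theorem support_subset_zero_of_eval_eq {a b c d q : ℂ} (hb : b ≠ 0) (hq : ‖q‖ ≤ 1)
    {F : ExpPoly} (hF : F ∈ normalized)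
    (h : ∀ z, deriv (fun w => eval w F) z =
      a * eval (q * z) F + b * eval z F ^ 2 + c * eval z F + d) :
    F.support ⊆ {0} := by
  set G := derivative F - a • dilate q F - b • mul F F - c • F - Finsupp.single 0 (C d)
  have hG : G = 0 := by
    refine eq_zero_of_eval_eq_zero ?_ fun z => ?_
    · refine sub_mem (sub_mem (sub_mem (sub_mem (derivative_mem_normalized hF)
        (Submodule.smul_mem _ _ (dilate_mem_normalized q hF)))
        (Submodule.smul_mem _ _ (mul_mem_normalized hF hF))) (Submodule.smul_mem _ _ hF))
        (Finsupp.single_mem_supported ℂ _ (coeff_zero 0))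
    · simp only [G, map_sub, map_smul, smul_eq_mul, ← (hasDerivAt_eval F z).deriv, h z,
        eval_dilate, eval_mul, eval_single, eval_C, eval_zero, exp_zero, mul_one]
      ring
  by_contra hsub
  obtain ⟨P, hP, hP0⟩ : ∃ P ∈ F.support, P ≠ 0 := by
    simpa [Finset.subset_iff] using hsub
  have hPdeg : P.natDegree ≠ 0 := fun h0 =>
    hP0 (by rw [eq_C_of_natDegree_eq_zero h0, hF hP, C_0])
  obtain ⟨t, ht, hext, ht0, htt, htdil⟩ := exists_top_exponent F.support hP hPdeg hq
  have hGt : G (t + t) = -(C b * (F t * F t)) := by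
    have hder : derivative F (t + t) = 0 :=
      sum_single_apply_eq_zero _ _ _ fun Q hQ => ne_of_mem_of_not_mem hQ htt
    have hdil : dilate q F (t + t) = 0 := sum_single_apply_eq_zero _ _ _ htdil
    simp [G, hder, hdil, mul_apply_add ht ht hext, Finsupp.notMem_support_iff.mp htt,
      Finsupp.single_eq_of_ne ht0, smul_eq_C_mul]
  have hFt : F t * F t = 0 := by
    simpa [hb, hG] using hGt
  exact Finsupp.mem_support_iff.mp ht (mul_self_eq_zero.mp hFt)

end ExpPoly

theorem stmt3_general (A B C D q : ℂ) (hB : B ≠ 0)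
    (hq1 : ‖q‖ < 1)
    (f : ℂ → ℂ)
    (hexp : ∃ (k : ℕ) (P Q : Fin k → Polynomial ℂ),
      ∀ z : ℂ, f z = ∑ j : Fin k, (P j).eval z * Complex.exp ((Q j).eval z))
    (heq : ∀ z : ℂ, deriv f z = A * f (q * z) + B * (f z) ^ 2 + C * f z + D) :
    ∃ c : ℂ, ∀ z : ℂ, f z = c := by
  obtain ⟨F, hF, hfF⟩ := ExpPoly.exists_mem_normalized_eval_eq hexp
  obtain rfl : f = fun z => ExpPoly.eval z F := funext hfF
  obtain ⟨p, rfl⟩ := Finsupp.support_subset_singleton'.mp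
    (ExpPoly.support_subset_zero_of_eval_eq hB hq1.le hF heq)
  simp only [ExpPoly.eval_single, eval_zero, exp_zero, mul_one, Polynomial.deriv] at heq ⊢
  have hp : derivative p = Polynomial.C A * p.comp (Polynomial.C q * X) + Polynomial.C B * p ^ 2 +
      Polynomial.C C * p + Polynomial.C D :=
    Polynomial.funext fun z => by simpa using heq z
  obtain ⟨c, rfl⟩ : ∃ c, p = Polynomial.C c :=
    ⟨_, eq_C_of_natDegree_eq_zero (natDegree_eq_zero_of_derivative_eq hB hp)⟩
  exact ⟨c, fun z => eval_C⟩

/-- For `A ≠ 0`, `B ≠ 0`, `0 < |q| < 1`: if an exponential polynomial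
`f(z) = Σ_{j=1}^k P_j(z) exp(Q_j(z))` satisfies `f'(z) = A f(qz) + B f(z)² + C f(z) + D`
for all `z`, then `f` is constant. -/
theorem stmt3 (A B C D q : ℂ) (hA : A ≠ 0) (hB : B ≠ 0)
    (hq0 : 0 < ‖q‖) (hq1 : ‖q‖ < 1)
    (f : ℂ → ℂ)
    (hexp : ∃ (k : ℕ) (P Q : Fin k → Polynomial ℂ),
      ∀ z : ℂ, f z = ∑ j : Fin k, (P j).eval z * Complex.exp ((Q j).eval z))
    (heq : ∀ z : ℂ, deriv f z = A * f (q * z) + B * (f z) ^ 2 + C * f z + D) :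
    ∃ c : ℂ, ∀ z : ℂ, f z = c :=
  stmt3_general A B C D q hB hq1 f hexp heq
end

section
/- Let A, B, C, D, q ∈ ℂ with A ≠ 0, B ≠ 0, and 0 < |q| < 1. Let f be meromorphic on ℂ and satisfy f'(z) = A·f(qz) + B·f(z)^2 + C·f(z) + D at every point z at which f is analytic at both z and qz. Then every pole of f is simple (f has order exactly −1 there), and the residue of f at each pole equals −1/B. -/
/-!
Let `z₀` be a pole of `f` of order `m` with leading coefficient `c`. Multiply the equation by
`(z - z₀) ^ (2m)` and let `z → z₀`: the term `B f²` tends to `B c² ≠ 0`, the term `f'` tends to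
`-c` if `m = 1` and to `0` if `m ≥ 2`, and the remaining terms tend to `0` as long as `f (q z)`
has a pole of order less than `2m` at `z₀`. Hence `m = 1` and `-c = B c²`, i.e. `c = -1/B`.
The proviso is automatic at `z₀ = 0`. For `z₀ ≠ 0` the orbit `qᵏ z₀` tends to `0`, so `f` is
analytic at some `qᵏ z₀`, and descending along the orbit every point of it is at worst a simple
pole of `f`.
-/

open Filter Topology

section General

variable {𝕜 E : Type*} [NontriviallyNormedField 𝕜] [NormedAddCommGroup E] [NormedSpace 𝕜 E]
  {f g : 𝕜 → E} {x : 𝕜}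

theorem MeromorphicAt.tendsto_sub_zpow_smul_nhdsNE_zero (hf : MeromorphicAt f x) {k : ℤ}
    (hk : ((-k : ℤ) : WithTop ℤ) < meromorphicOrderAt f x) :
    Tendsto (fun z => (z - x) ^ k • f z) (𝓝[≠] x) (𝓝 0) := by
  apply tendsto_zero_of_meromorphicOrderAt_pos
  rw [fun_meromorphicOrderAt_smul (by fun_prop) hf, fun_meromorphicOrderAt_zpow_id_sub_const]
  cases h : meromorphicOrderAt f x with
  | top => simp
  | coe n =>
    rw [h] at hk
    have hk : -k < n := by exact_mod_cast hk
    exact_mod_cast (by omega : 0 < k + n)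

theorem tendsto_sub_zpow_smul_deriv [CompleteSpace E] {n : ℤ} (hg : AnalyticAt 𝕜 g x)
    (hfg : f =ᶠ[𝓝[≠] x] fun z => (z - x) ^ n • g z) :
    Tendsto (fun z => (z - x) ^ (1 - n) • deriv f z) (𝓝[≠] x) (𝓝 ((n : 𝕜) • g x)) := by
  have hcont : ContinuousAt (fun z => (n : 𝕜) • g z + (z - x) • deriv g z) x := by fun_prop
  have hlim := hcont.continuousWithinAt (s := {x}ᶜ) |>.tendsto
  simp only [sub_self, zero_smul, add_zero] at hlim
  refine hlim.congr' ?_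
  filter_upwards [hg.eventually_analyticAt.filter_mono nhdsWithin_le_nhds,
    eventually_mem_nhdsWithin, hfg.nhdsNE_deriv] with z hgz hzx hdf
  have hzx : z - x ≠ 0 := sub_ne_zero.mpr hzx
  have hpow : HasDerivAt (fun y => (y - x) ^ n) ((n : 𝕜) * (z - x) ^ (n - 1)) z :=
    (hasDerivAt_zpow n (z - x) (Or.inl hzx)).comp_sub_const z x
  rw [hdf, (hpow.fun_smul hgz.differentiableAt.hasDerivAt).deriv, smul_add, smul_smul, smul_smul,
    mul_left_comm, ← zpow_add₀ hzx, ← zpow_add₀ hzx]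
  simp [add_comm]

end General

theorem tendsto_mul_left_nhdsNE {G₀ : Type*} [GroupWithZero G₀] [TopologicalSpace G₀]
    [ContinuousMul G₀] {q : G₀} (hq : q ≠ 0) (z : G₀) :
    Tendsto (q * ·) (𝓝[≠] z) (𝓝[≠] (q * z)) := by
  refine tendsto_nhdsWithin_of_tendsto_nhds_of_eventually_within _
    ((continuous_const_mul q).continuousWithinAt.tendsto) ?_
  filter_upwards [self_mem_nhdsWithin] with w hw
  exact (mul_right_injective₀ hq).ne hw

theorem tendsto_pow_mul_nhdsNE_zero {K : Type*} [NormedDivisionRing K] {q z : K} (hq : q ≠ 0)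
    (hq₁ : ‖q‖ < 1) (hz : z ≠ 0) :
    Tendsto (fun n : ℕ => q ^ n * z) atTop (𝓝[≠] 0) := by
  refine tendsto_nhdsWithin_of_tendsto_nhds_of_eventually_within _ ?_
    (Eventually.of_forall fun n => mul_ne_zero (pow_ne_zero n hq) hz)
  simpa using (tendsto_pow_atTop_nhds_zero_of_norm_lt_one hq₁).mul_const z

section Equation

variable {A B C D q : ℂ} {f : ℂ → ℂ}

theorem eq_neg_one_and_tendsto_of_two_mul_lt_order_mul (hB : B ≠ 0) (hq : q ≠ 0) {z₀ : ℂ}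
    (hf₀ : MeromorphicAt f z₀) (hfq : MeromorphicAt f (q * z₀))
    (heq : ∀ z : ℂ, AnalyticAt ℂ f z → AnalyticAt ℂ f (q * z) →
      deriv f z = A * f (q * z) + B * (f z) ^ 2 + C * f z + D)
    {n : ℤ} (hn : n < 0) (hord : meromorphicOrderAt f z₀ = n)
    (hqord : ((2 * n : ℤ) : WithTop ℤ) < meromorphicOrderAt f (q * z₀)) :
    n = -1 ∧ Tendsto (fun z : ℂ => (z - z₀) * f z) (𝓝[≠] z₀) (𝓝 (-1 / B)) := by
  obtain ⟨g, hg, hg₀, hfg⟩ := (meromorphicOrderAt_eq_int_iff hf₀).mp hord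
  have hlim_f : Tendsto (fun z => (z - z₀) ^ (-n) * f z) (𝓝[≠] z₀) (𝓝 (g z₀)) := by
    refine (hg.continuousAt.continuousWithinAt (s := {z₀}ᶜ)).tendsto.congr' ?_
    filter_upwards [hfg, eventually_mem_nhdsWithin] with z hz hzz₀
    rw [hz, smul_eq_mul, ← mul_assoc, ← zpow_add₀ (sub_ne_zero.mpr hzz₀), neg_add_cancel,
      zpow_zero, one_mul]
  have hlim_deriv : Tendsto (fun z => (z - z₀) ^ (-n - 1) * ((z - z₀) ^ (1 - n) * deriv f z))
      (𝓝[≠] z₀) (𝓝 (0 ^ (-n - 1) * (n * g z₀))) := by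
    have hpow : ContinuousAt (fun z : ℂ => (z - z₀) ^ (-n - 1)) z₀ :=
      (continuousAt_id.sub continuousAt_const).zpow₀ _ (Or.inr (by omega))
    simpa using hpow.continuousWithinAt.tendsto.mul (tendsto_sub_zpow_smul_deriv hg hfg)
  have hlim_rest : Tendsto (fun z => (z - z₀) ^ (-(2 * n)) * (A * f (q * z) + C * f z + D))
      (𝓝[≠] z₀) (𝓝 0) := by
    have hfq' : MeromorphicAt (f ∘ (q * ·)) z₀ := hfq.comp_analyticAt (by fun_prop)
    have h₁ := hfq'.tendsto_sub_zpow_smul_nhdsNE_zero (k := -(2 * n))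
      (by rwa [meromorphicOrderAt_comp_of_deriv_ne_zero (by fun_prop) (by simpa using hq), neg_neg])
    have h₂ := hf₀.tendsto_sub_zpow_smul_nhdsNE_zero (k := -(2 * n))
      (by rw [hord]; exact_mod_cast (by omega : -(-(2 * n)) < n))
    have hD : AnalyticAt ℂ (fun _ => D) z₀ := analyticAt_const
    have h₃ := hD.meromorphicAt.tendsto_sub_zpow_smul_nhdsNE_zero (k := -(2 * n))
      (lt_of_lt_of_le (by exact_mod_cast (by omega : -(-(2 * n)) < 0))
        hD.meromorphicOrderAt_nonneg)
    simpa [mul_add, mul_left_comm] using ((h₁.const_mul A).add (h₂.const_mul C)).add h₃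
  have hlim_rhs : Tendsto (fun z => B * ((z - z₀) ^ (-n) * f z) ^ 2
      + (z - z₀) ^ (-(2 * n)) * (A * f (q * z) + C * f z + D)) (𝓝[≠] z₀)
      (𝓝 (B * g z₀ ^ 2 + 0)) := ((hlim_f.pow 2).const_mul B).add hlim_rest
  have hlim_eq : 0 ^ (-n - 1) * (n * g z₀) = B * g z₀ ^ 2 := by
    rw [← add_zero (B * g z₀ ^ 2)]
    refine tendsto_nhds_unique hlim_deriv (hlim_rhs.congr' ?_)
    filter_upwards [hf₀.eventually_analyticAt,
      (tendsto_mul_left_nhdsNE hq z₀).eventually hfq.eventually_analyticAt,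
      eventually_mem_nhdsWithin] with z hz hqz hzz₀
    have hzz₀ : z - z₀ ≠ 0 := sub_ne_zero.mpr hzz₀
    have hsq : ((z - z₀) ^ (-n)) ^ 2 = (z - z₀) ^ (-(2 * n)) := by
      rw [← zpow_natCast, ← zpow_mul]; ring_nf
    have hprod : (z - z₀) ^ (-n - 1) * (z - z₀) ^ (1 - n) = (z - z₀) ^ (-(2 * n)) := by
      rw [← zpow_add₀ hzz₀]; ring_nf
    rw [heq z hz hqz]
    linear_combination (B * f z ^ 2) * hsq - (A * f (q * z) + B * f z ^ 2 + C * f z + D) * hprod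
  have hn : n = -1 := by
    by_contra hn
    rw [zero_zpow _ (by omega), zero_mul] at hlim_eq
    exact mul_ne_zero hB (pow_ne_zero 2 hg₀) hlim_eq.symm
  subst hn
  have hres : g z₀ = -1 / B := by
    norm_num at hlim_eq
    rw [eq_div_iff hB]
    apply mul_left_cancel₀ hg₀
    linear_combination -hlim_eq
  refine ⟨rfl, ?_⟩
  simpa [hres] using hlim_f

theorem neg_one_le_order_of_neg_one_le_order_mul (hB : B ≠ 0) (hq : q ≠ 0) {z : ℂ}
    (hf₀ : MeromorphicAt f z) (hfq : MeromorphicAt f (q * z))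
    (heq : ∀ z : ℂ, AnalyticAt ℂ f z → AnalyticAt ℂ f (q * z) →
      deriv f z = A * f (q * z) + B * (f z) ^ 2 + C * f z + D)
    (h : ((-1 : ℤ) : WithTop ℤ) ≤ meromorphicOrderAt f (q * z)) :
    ((-1 : ℤ) : WithTop ℤ) ≤ meromorphicOrderAt f z := by
  by_contra! hlt
  cases hord : meromorphicOrderAt f z with
  | top => simp [hord] at hlt
  | coe n =>
    have hn : n < -1 := by rw [hord] at hlt; exact_mod_cast hlt
    have hqord : ((2 * n : ℤ) : WithTop ℤ) < meromorphicOrderAt f (q * z) :=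
      lt_of_lt_of_le (by exact_mod_cast (by omega : 2 * n < -1)) h
    have hn' := (eq_neg_one_and_tendsto_of_two_mul_lt_order_mul hB hq hf₀ hfq heq (by omega)
      hord hqord).1
    omega

theorem neg_one_le_order_of_neg_one_le_order_pow_mul (hB : B ≠ 0) (hq : q ≠ 0)
    (hf : ∀ z : ℂ, MeromorphicAt f z)
    (heq : ∀ z : ℂ, AnalyticAt ℂ f z → AnalyticAt ℂ f (q * z) →
      deriv f z = A * f (q * z) + B * (f z) ^ 2 + C * f z + D)
    (n : ℕ) {z : ℂ} (h : ((-1 : ℤ) : WithTop ℤ) ≤ meromorphicOrderAt f (q ^ n * z)) :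
    ((-1 : ℤ) : WithTop ℤ) ≤ meromorphicOrderAt f z := by
  induction n generalizing z with
  | zero => simpa using h
  | succ n ih =>
    refine neg_one_le_order_of_neg_one_le_order_mul hB hq (hf z) (hf _) heq (ih ?_)
    rwa [← mul_assoc, ← pow_succ]

end Equation

theorem stmt4_general (A B C D q : ℂ) (hB : B ≠ 0)
    (hq0 : 0 < ‖q‖) (hq1 : ‖q‖ < 1)
    (f : ℂ → ℂ) (hf : ∀ z : ℂ, MeromorphicAt f z)
    (heq : ∀ z : ℂ, AnalyticAt ℂ f z → AnalyticAt ℂ f (q * z) →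
      deriv f z = A * f (q * z) + B * (f z) ^ 2 + C * f z + D) :
    ∀ z₀ : ℂ, meromorphicOrderAt f z₀ < 0 →
      meromorphicOrderAt f z₀ = (-1 : ℤ) ∧
      Tendsto (fun z : ℂ => (z - z₀) * f z) (𝓝[≠] z₀) (𝓝 (-1 / B)) := by
  intro z₀ hz₀
  have hq : q ≠ 0 := norm_pos_iff.mp hq0
  obtain ⟨n, hn⟩ := WithTop.ne_top_iff_exists.mp hz₀.ne_top
  have hn₀ : n < 0 := by rw [← hn] at hz₀; exact_mod_cast hz₀
  suffices hqord : ((2 * n : ℤ) : WithTop ℤ) < meromorphicOrderAt f (q * z₀) by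
    obtain ⟨rfl, hres⟩ := eq_neg_one_and_tendsto_of_two_mul_lt_order_mul hB hq (hf z₀)
      (hf (q * z₀)) heq hn₀ hn.symm hqord
    exact ⟨hn.symm, hres⟩
  rcases eq_or_ne z₀ 0 with rfl | hz
  · rw [mul_zero, ← hn]
    exact_mod_cast (by omega : 2 * n < n)
  · obtain ⟨k, hk⟩ := ((tendsto_pow_mul_nhdsNE_zero hq hq1 (mul_ne_zero hq hz)).eventually
      (hf 0).eventually_analyticAt).exists
    have hqz := neg_one_le_order_of_neg_one_le_order_pow_mul hB hq hf heq k
      ((WithTop.coe_le_coe.mpr (by norm_num)).trans hk.meromorphicOrderAt_nonneg)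
    exact lt_of_lt_of_le (by exact_mod_cast (by omega : 2 * n < -1)) hqz

/-- For `A ≠ 0`, `B ≠ 0`, `0 < |q| < 1`: if `f` is meromorphic on `ℂ` and
satisfies `f'(z) = A f(qz) + B f(z)² + C f(z) + D` at every `z` at which `f` is analytic
at both `z` and `qz`, then every pole of `f` is simple and has residue `-1/B`. -/
theorem stmt4 (A B C D q : ℂ) (hA : A ≠ 0) (hB : B ≠ 0)
    (hq0 : 0 < ‖q‖) (hq1 : ‖q‖ < 1)
    (f : ℂ → ℂ) (hf : ∀ z : ℂ, MeromorphicAt f z)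
    (heq : ∀ z : ℂ, AnalyticAt ℂ f z → AnalyticAt ℂ f (q * z) →
      deriv f z = A * f (q * z) + B * (f z) ^ 2 + C * f z + D) :
    ∀ z₀ : ℂ, meromorphicOrderAt f z₀ < 0 →
      meromorphicOrderAt f z₀ = (-1 : ℤ) ∧
      Tendsto (fun z : ℂ => (z - z₀) * f z) (𝓝[≠] z₀) (𝓝 (-1 / B)) :=
  stmt4_general A B C D q hB hq0 hq1 f hf heq
end

section
/- Let A, C, q ∈ ℂ with 0 < |q| < 1, and let (b_n)_{n≥0} be any sequence of complex numbers satisfying the recursion (n+3)·b_{n+1} = A·q^n·b_n + Σ_{i+j=n} b_i·b_j + C·b_n for all n ≥ 1 (where the sum is over pairs (i,j) of nonnegative integers with i + j = n). Then the power series Σ_{n≥0} b_n·w^n has a positive radius of convergence. -/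
/-!
Taking norms in the recursion (with `‖q‖ ≤ 1`) gives
`(n + 3) ‖b (n + 1)‖ ≤ (‖A‖ + ‖C‖) ‖b n‖ + ∑_{i+j=n} ‖b i‖ ‖b j‖`.
The right-hand side has at most `n + 2` terms, so if `M ≥ 1` dominates `‖b 0‖`, `‖b 1‖` and
`‖A‖ + ‖C‖`, strong induction yields `‖b n‖ ≤ M ^ (n + 1)`: the factor `n + 3` on the left absorbs
the growing number of terms of the convolution. The series is therefore dominated by a geometric
series for `‖w‖ < 1 / M`.
-/

open Finset

lemma sum_antidiagonal_mul_le_pow {a : ℕ → ℝ} {M : ℝ} {n : ℕ} (ha : ∀ i, 0 ≤ a i)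
    (hle : ∀ i ≤ n, a i ≤ M ^ (i + 1)) :
    ∑ p ∈ antidiagonal n, a p.1 * a p.2 ≤ (n + 1) * M ^ (n + 2) := by
  calc ∑ p ∈ antidiagonal n, a p.1 * a p.2
      ≤ ∑ _p ∈ antidiagonal n, M ^ (n + 2) := by
        refine sum_le_sum fun p hp => ?_
        have hsum : p.1 + p.2 = n := HasAntidiagonal.mem_antidiagonal.mp hp
        calc a p.1 * a p.2 ≤ M ^ (p.1 + 1) * M ^ (p.2 + 1) :=
              mul_le_mul (hle _ (by omega)) (hle _ (by omega)) (ha _)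
                ((ha _).trans (hle _ (by omega)))
          _ = M ^ (n + 2) := by rw [← pow_add]; congr 1; omega
    _ = (n + 1) * M ^ (n + 2) := by
        rw [sum_const, Nat.card_antidiagonal, nsmul_eq_mul]; push_cast; ring

lemma le_pow_succ_of_quadratic_recursion {a : ℕ → ℝ} {K M : ℝ} (ha : ∀ n, 0 ≤ a n)
    (hKM : K ≤ M) (hM : 1 ≤ M) (ha0 : a 0 ≤ M) (ha1 : a 1 ≤ M)
    (hrec : ∀ n : ℕ, 1 ≤ n →
      ((n : ℝ) + 3) * a (n + 1) ≤ K * a n + ∑ p ∈ antidiagonal n, a p.1 * a p.2) :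
    ∀ n, a n ≤ M ^ (n + 1) := by
  intro n
  induction n using Nat.strong_induction_on with
  | _ n ih =>
    match n with
    | 0 => simpa using ha0
    | 1 => exact ha1.trans (le_self_pow₀ hM (by norm_num))
    | k + 2 =>
      have hlin : K * a (k + 1) ≤ M ^ (k + 3) :=
        calc K * a (k + 1) ≤ M * M ^ (k + 2) :=
              mul_le_mul hKM (ih (k + 1) (by omega)) (ha _) (by positivity)
          _ = M ^ (k + 3) := by ring
      have hconv :
          ∑ p ∈ antidiagonal (k + 1), a p.1 * a p.2 ≤ ((k : ℝ) + 2) * M ^ (k + 3) := by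
        have := sum_antidiagonal_mul_le_pow (n := k + 1) ha fun i hi => ih i (by omega)
        push_cast at this
        linarith
      have : ((k : ℝ) + 4) * a (k + 2) ≤ ((k : ℝ) + 4) * M ^ (k + 3) :=
        calc ((k : ℝ) + 4) * a (k + 2) = (((k + 1 : ℕ) : ℝ) + 3) * a (k + 1 + 1) := by
              push_cast; ring
          _ ≤ K * a (k + 1) + ∑ p ∈ antidiagonal (k + 1), a p.1 * a p.2 :=
              hrec (k + 1) (by omega)
          _ ≤ ((k : ℝ) + 3) * M ^ (k + 3) := by linarith
          _ ≤ ((k : ℝ) + 4) * M ^ (k + 3) := by gcongr; linarith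
      exact le_of_mul_le_mul_left this (by positivity)

lemma norm_le_of_recursion {A C q : ℂ} (hq : ‖q‖ ≤ 1) {b : ℕ → ℂ} {n : ℕ}
    (h : ((n : ℂ) + 3) * b (n + 1) =
      A * q ^ n * b n + (∑ p ∈ antidiagonal n, b p.1 * b p.2) + C * b n) :
    ((n : ℝ) + 3) * ‖b (n + 1)‖ ≤
      (‖A‖ + ‖C‖) * ‖b n‖ + ∑ p ∈ antidiagonal n, ‖b p.1‖ * ‖b p.2‖ := by
  have hlhs : ‖((n : ℂ) + 3) * b (n + 1)‖ = ((n : ℝ) + 3) * ‖b (n + 1)‖ := by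
    rw [norm_mul, show (n : ℂ) + 3 = ((n + 3 : ℕ) : ℂ) by push_cast; ring, norm_natCast]
    push_cast; ring
  have hqn : ‖q ^ n‖ ≤ 1 := by rw [norm_pow]; exact pow_le_one₀ (norm_nonneg q) hq
  have hA : ‖A * q ^ n * b n‖ ≤ ‖A‖ * ‖b n‖ := by
    rw [norm_mul, norm_mul]
    exact mul_le_mul_of_nonneg_right (mul_le_of_le_one_right (norm_nonneg A) hqn) (norm_nonneg _)
  have hconv :
      ‖∑ p ∈ antidiagonal n, b p.1 * b p.2‖ ≤ ∑ p ∈ antidiagonal n, ‖b p.1‖ * ‖b p.2‖ :=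
    (norm_sum_le _ _).trans_eq (by simp only [norm_mul])
  rw [← hlhs, h]
  calc _ ≤ ‖A * q ^ n * b n‖ + ‖∑ p ∈ antidiagonal n, b p.1 * b p.2‖ + ‖C * b n‖ :=
        norm_add₃_le
    _ ≤ _ := by rw [norm_mul C]; linarith

lemma summable_mul_pow_of_norm_le_pow_succ {𝕜 : Type*} [NormedField 𝕜] [CompleteSpace 𝕜]
    {b : ℕ → 𝕜} {M : ℝ} (hb : ∀ n, ‖b n‖ ≤ M ^ (n + 1)) {w : 𝕜} (hw : M * ‖w‖ < 1) :
    Summable fun n => b n * w ^ n := by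
  have hM : 0 ≤ M := by simpa using (norm_nonneg _).trans (hb 0)
  refine .of_norm_bounded
    ((summable_geometric_of_lt_one (by positivity) hw).mul_left M) fun n => ?_
  calc ‖b n * w ^ n‖ = ‖b n‖ * ‖w‖ ^ n := by rw [norm_mul, norm_pow]
    _ ≤ M ^ (n + 1) * ‖w‖ ^ n := by gcongr; exact hb n
    _ = M * (M * ‖w‖) ^ n := by ring

theorem stmt8_general (A C q : ℂ) (hq1 : ‖q‖ < 1)
    (b : ℕ → ℂ)
    (hrec : ∀ n : ℕ, 1 ≤ n →
      ((n : ℂ) + 3) * b (n + 1) =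
        A * q ^ n * b n + (∑ p ∈ Finset.HasAntidiagonal.antidiagonal n, b p.1 * b p.2) + C * b n) :
    ∃ r : ℝ, 0 < r ∧ ∀ w : ℂ, ‖w‖ < r → Summable (fun n : ℕ => b n * w ^ n) := by
  set M : ℝ := max (max 1 ‖b 0‖) (max ‖b 1‖ (‖A‖ + ‖C‖))
  have hM : 1 ≤ M := le_max_of_le_left (le_max_left _ _)
  have hbound : ∀ n, ‖b n‖ ≤ M ^ (n + 1) :=
    le_pow_succ_of_quadratic_recursion (fun _ => norm_nonneg _)
      (le_max_of_le_right (le_max_right _ _)) hM (le_max_of_le_left (le_max_right _ _))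
      (le_max_of_le_right (le_max_left _ _))
      fun n hn => norm_le_of_recursion hq1.le (hrec n hn)
  refine ⟨1 / M, by positivity, fun w hw => ?_⟩
  apply summable_mul_pow_of_norm_le_pow_succ hbound
  rwa [lt_div_iff₀ (by positivity), mul_comm] at hw

/-- If `0 < |q| < 1` and `(b n)` satisfies
`(n+3) b_{n+1} = A q^n b_n + Σ_{i+j=n} b_i b_j + C b_n` for all `n ≥ 1`, then the power
series `Σ b_n w^n` has positive radius of convergence. -/
theorem stmt8 (A C q : ℂ) (hq0 : 0 < ‖q‖) (hq1 : ‖q‖ < 1)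
    (b : ℕ → ℂ)
    (hrec : ∀ n : ℕ, 1 ≤ n →
      ((n : ℂ) + 3) * b (n + 1) =
        A * q ^ n * b n + (∑ p ∈ Finset.HasAntidiagonal.antidiagonal n, b p.1 * b p.2) + C * b n) :
    ∃ r : ℝ, 0 < r ∧ ∀ w : ℂ, ‖w‖ < r → Summable (fun n : ℕ => b n * w ^ n) :=
  stmt8_general A C q hq1 b hrec
end

section
/- Let A, C, D, q ∈ ℂ with A ≠ 0 and |q| > 1. Then every entire function f : ℂ → ℂ satisfying f'(z) = A·f(qz) + C·f(z) + D for all z ∈ ℂ is a polynomial function; in particular, the equation has no transcendental entire solutions. -/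
/-!
Differentiating the equation `n` times and evaluating at `0` gives, for `n ≥ 1`, the recurrence
`aₙ₊₁ = (A qⁿ + C) / (n + 1) · aₙ` for the Taylor coefficients `aₙ` of `f` at `0`. Since `|q| > 1`,
the factor eventually has modulus at least `1`, so `‖aₙ‖` is eventually nondecreasing; but
`aₙ → 0` because the Taylor series converges at `1`. Hence `aₙ = 0` for large `n`, and `f` is a
polynomial.
-/

open Filter Topology Asymptotics Nat

theorem eventually_eq_zero_of_tendsto_zero_of_norm_le_succ {E : Type*} [NormedAddCommGroup E]
    {a : ℕ → E} (ha : Tendsto a atTop (𝓝 0)) (hmono : ∀ᶠ n in atTop, ‖a n‖ ≤ ‖a (n + 1)‖) :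
    ∀ᶠ n in atTop, a n = 0 := by
  obtain ⟨N, hN⟩ := eventually_atTop.mp hmono
  have hmono' : Monotone fun m => ‖a (m + N)‖ :=
    monotone_nat_of_le_succ fun m => by simpa only [add_right_comm] using hN (m + N) le_add_self
  have hlim : Tendsto (fun m => ‖a (m + N)‖) atTop (𝓝 0) := by
    simpa using (tendsto_add_atTop_iff_nat N).mpr ha.norm
  refine eventually_atTop.mpr ⟨N, fun n hn => ?_⟩
  obtain ⟨m, rfl⟩ := Nat.exists_eq_add_of_le' hn
  exact norm_le_zero_iff.mp (hmono'.ge_of_tendsto hlim m)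

theorem eventually_natCast_add_one_le_norm_mul_pow_add {𝕜 : Type*} [NormedDivisionRing 𝕜]
    {A q : 𝕜} (C : 𝕜) (hA : A ≠ 0) (hq : 1 < ‖q‖) :
    ∀ᶠ n : ℕ in atTop, (n : ℝ) + 1 ≤ ‖A * q ^ n + C‖ := by
  have hlittle : (fun n : ℕ => (n : ℝ) + (1 + ‖C‖)) =o[atTop] fun n => ‖q‖ ^ n :=
    (isLittleO_coe_const_pow_of_one_lt hq).add <| isLittleO_const_left.mpr <| Or.inr <|
      (tendsto_pow_atTop_atTop_of_one_lt hq).congr fun n => by simp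
  filter_upwards [hlittle.bound (norm_pos_iff.mpr hA)] with n hn
  rw [Real.norm_of_nonneg (by positivity), Real.norm_of_nonneg (by positivity)] at hn
  have := norm_sub_norm_le (A * q ^ n) (-C)
  rw [norm_neg, sub_neg_eq_add, norm_mul, norm_pow] at this
  linarith

theorem iteratedDeriv_succ_zero_eq_of_deriv_eq {𝕜 : Type*} [NontriviallyNormedField 𝕜]
    {A C D q : 𝕜} {f : 𝕜 → 𝕜} {n : ℕ} (hn : n ≠ 0) (hf : ContDiff 𝕜 n f)
    (heq : ∀ z, deriv f z = A * f (q * z) + C * f z + D) :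
    iteratedDeriv (n + 1) f 0 = (A * q ^ n + C) * iteratedDeriv n f 0 := by
  have hderiv : deriv f = fun z => D + (A * f (q * z) + C * f z) := by
    ext z; rw [heq]; ring
  have hcomp : ContDiff 𝕜 n fun z => f (q * z) := hf.comp (contDiff_const.mul contDiff_id)
  rw [iteratedDeriv_succ', hderiv, iteratedDeriv_const_add (Nat.pos_of_ne_zero hn),
    iteratedDeriv_fun_add (contDiffAt_const.mul hcomp.contDiffAt)
      (contDiffAt_const.mul hf.contDiffAt),
    iteratedDeriv_const_mul_field, iteratedDeriv_const_mul_field,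
    iteratedDeriv_comp_const_mul hf]
  simp only [mul_zero]
  ring

theorem tendsto_factorial_inv_smul_iteratedDeriv_of_entire {E : Type*} [NormedAddCommGroup E]
    [NormedSpace ℂ E] [CompleteSpace E] {f : ℂ → E} (hf : Differentiable ℂ f) (c : ℂ) :
    Tendsto (fun n => (n ! : ℂ)⁻¹ • iteratedDeriv n f c) atTop (𝓝 0) := by
  simpa using (Complex.hasSum_taylorSeries_of_entire hf c (c + 1)).summable.tendsto_atTop_zero

theorem exists_eq_polynomial_eval_of_eventually_iteratedDeriv_zero_eq_zero {f : ℂ → ℂ}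
    (hf : Differentiable ℂ f) (h : ∀ᶠ n in atTop, iteratedDeriv n f 0 = 0) :
    ∃ p : Polynomial ℂ, ∀ z, f z = p.eval z := by
  obtain ⟨N, hN⟩ := eventually_atTop.mp h
  refine ⟨∑ n ∈ Finset.range N, .C ((n ! : ℂ)⁻¹ * iteratedDeriv n f 0) * .X ^ n, fun z => ?_⟩
  rw [← Complex.taylorSeries_eq_of_entire' 0 z hf, tsum_eq_sum (s := Finset.range N)]
  · simp [Polynomial.eval_finsetSum]
  · intro n hn
    simp [hN n (by simpa using hn)]

theorem norm_factorial_inv_smul_le_succ {𝕜 E : Type*} [RCLike 𝕜] [NormedAddCommGroup E]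
    [NormedSpace 𝕜 E] {x y : E} (n : ℕ) (h : (n + 1) * ‖x‖ ≤ ‖y‖) :
    ‖(n ! : 𝕜)⁻¹ • x‖ ≤ ‖((n + 1)! : 𝕜)⁻¹ • y‖ := by
  have hfac : (0 : ℝ) < n ! := mod_cast n.factorial_pos
  rw [norm_smul, norm_smul, norm_inv, norm_inv, RCLike.norm_natCast, RCLike.norm_natCast,
    Nat.factorial_succ, Nat.cast_mul, Nat.cast_succ, mul_inv, mul_assoc, inv_mul_le_iff₀ hfac,
    mul_left_comm, mul_inv_cancel_left₀ hfac.ne', le_inv_mul_iff₀ (by positivity)]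
  exact h

/-- For `A ≠ 0` and `|q| > 1`, every entire solution of
`f'(z) = A f(qz) + C f(z) + D` is a polynomial function. -/
theorem stmt10 (A C D q : ℂ) (hA : A ≠ 0) (hq : 1 < ‖q‖)
    (f : ℂ → ℂ) (hf : Differentiable ℂ f)
    (heq : ∀ z : ℂ, deriv f z = A * f (q * z) + C * f z + D) :
    ∃ p : Polynomial ℂ, ∀ z : ℂ, f z = p.eval z := by
  have hmono : ∀ᶠ n in atTop, ‖(n ! : ℂ)⁻¹ • iteratedDeriv n f 0‖ ≤
      ‖((n + 1)! : ℂ)⁻¹ • iteratedDeriv (n + 1) f 0‖ := by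
    filter_upwards [eventually_natCast_add_one_le_norm_mul_pow_add C hA hq,
      eventually_ne_atTop 0] with n hratio hn
    refine norm_factorial_inv_smul_le_succ n ?_
    rw [iteratedDeriv_succ_zero_eq_of_deriv_eq hn hf.contDiff heq, norm_mul]
    exact mul_le_mul_of_nonneg_right hratio (norm_nonneg _)
  refine exists_eq_polynomial_eval_of_eventually_iteratedDeriv_zero_eq_zero hf ?_
  filter_upwards [eventually_eq_zero_of_tendsto_zero_of_norm_le_succ
    (tendsto_factorial_inv_smul_iteratedDeriv_of_entire hf 0) hmono] with n hn
  simpa [Nat.factorial_ne_zero] using hn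
end

section
/- Let A, C, q ∈ ℂ with 0 < |q| < 1, and let (a_n)_{n≥0} be a sequence of complex numbers satisfying a_1 = a_0^2 + (A + C)·a_0 and (n+1)·a_{n+1} = A·q^n·a_n + Σ_{i+j=n} a_i·a_j + C·a_n for all n ≥ 1 (the sum over pairs (i,j) of nonnegative integers with i + j = n). If |a_0| ≤ 1, then |a_n| ≤ (|A| + |C| + 1)^n for all n ≥ 0. -/
/-!
Write the recursion uniformly as `(n + 1) a_{n+1} = b_n a_n + Σ_{i+j=n} a_i a_j` with
`b_n = A qⁿ + C`; the condition on `a₁` is its case `n = 0`, and `‖b_n‖ ≤ ‖A‖ + ‖C‖ =: B`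
because `|q| < 1`. By strong induction, with `M = B + 1`, the convolution has `n + 1` terms,
each of norm at most `Mⁿ`, so `(n + 1) ‖a_{n+1}‖ ≤ (B + n + 1) Mⁿ ≤ (n + 1) M^{n+1}`.
-/

open Finset

theorem norm_sum_antidiagonal_mul_le {R : Type*} [SeminormedRing R] {a : ℕ → R} {M : ℝ}
    {n : ℕ} (h : ∀ k ≤ n, ‖a k‖ ≤ M ^ k) :
    ‖∑ p ∈ antidiagonal n, a p.1 * a p.2‖ ≤ (n + 1) * M ^ n := by
  calc ‖∑ p ∈ antidiagonal n, a p.1 * a p.2‖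
      ≤ ∑ p ∈ antidiagonal n, ‖a p.1‖ * ‖a p.2‖ :=
        norm_sum_le_of_le _ fun p _ => norm_mul_le _ _
    _ ≤ ∑ _p ∈ antidiagonal n, M ^ n := by
        refine sum_le_sum fun p hp => ?_
        rw [HasAntidiagonal.mem_antidiagonal] at hp
        have h₁ := h p.1 (by omega)
        have h₂ := h p.2 (by omega)
        calc ‖a p.1‖ * ‖a p.2‖ ≤ M ^ p.1 * M ^ p.2 :=
              mul_le_mul h₁ h₂ (norm_nonneg _) ((norm_nonneg _).trans h₁)
          _ = M ^ n := by rw [← pow_add, hp]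
    _ = (n + 1) * M ^ n := by
        rw [sum_const, Nat.card_antidiagonal, nsmul_eq_mul]
        push_cast
        ring

section RiccatiRecursion

variable {𝕜 : Type*} [RCLike 𝕜] {a b : ℕ → 𝕜} {B : ℝ}

theorem norm_succ_le_pow_of_riccati_recursion (hb : ∀ n, ‖b n‖ ≤ B)
    (hrec : ∀ n : ℕ, ((n : 𝕜) + 1) * a (n + 1) =
      b n * a n + ∑ p ∈ antidiagonal n, a p.1 * a p.2)
    {n : ℕ} (h : ∀ k ≤ n, ‖a k‖ ≤ (B + 1) ^ k) :
    ‖a (n + 1)‖ ≤ (B + 1) ^ (n + 1) := by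
  have hB : 0 ≤ B := (norm_nonneg _).trans (hb 0)
  have hn : (0 : ℝ) < n + 1 := by positivity
  refine le_of_mul_le_mul_left ?_ hn
  calc ((n : ℝ) + 1) * ‖a (n + 1)‖ = ‖((n : 𝕜) + 1) * a (n + 1)‖ := by
        rw [norm_mul, ← Nat.cast_add_one (R := 𝕜), RCLike.norm_natCast, Nat.cast_add_one]
    _ ≤ ‖b n‖ * ‖a n‖ + ‖∑ p ∈ antidiagonal n, a p.1 * a p.2‖ := by
        rw [hrec, ← norm_mul]
        exact norm_add_le _ _
    _ ≤ B * (B + 1) ^ n + (n + 1) * (B + 1) ^ n := by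
        gcongr
        · exact hb n
        · exact h n le_rfl
        · exact norm_sum_antidiagonal_mul_le h
    _ ≤ (n + 1) * (B + 1) ^ (n + 1) := by
        have hBn : B ≤ (n + 1) * B := le_mul_of_one_le_left hB (by simp)
        have hMn : 0 ≤ (B + 1) ^ n := by positivity
        rw [pow_succ]
        nlinarith

theorem norm_le_pow_of_riccati_recursion (hb : ∀ n, ‖b n‖ ≤ B)
    (hrec : ∀ n : ℕ, ((n : 𝕜) + 1) * a (n + 1) =
      b n * a n + ∑ p ∈ antidiagonal n, a p.1 * a p.2)
    (ha0 : ‖a 0‖ ≤ 1) (n : ℕ) : ‖a n‖ ≤ (B + 1) ^ n := by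
  induction n using Nat.strong_induction_on with
  | _ n ih =>
    rcases n with _ | n
    · simpa using ha0
    · exact norm_succ_le_pow_of_riccati_recursion hb hrec fun k hk => ih k (by omega)

end RiccatiRecursion

theorem stmt13_general (A C q : ℂ) (hq1 : ‖q‖ < 1)
    (a : ℕ → ℂ)
    (h1 : a 1 = (a 0) ^ 2 + (A + C) * a 0)
    (hrec : ∀ n : ℕ, 1 ≤ n →
      ((n : ℂ) + 1) * a (n + 1) =
        A * q ^ n * a n + (∑ p ∈ Finset.HasAntidiagonal.antidiagonal n, a p.1 * a p.2) + C * a n)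
    (ha0 : ‖a 0‖ ≤ 1) :
    ∀ n : ℕ, ‖a n‖ ≤ (‖A‖ + ‖C‖ + 1) ^ n := by
  have hb (n : ℕ) : ‖A * q ^ n + C‖ ≤ ‖A‖ + ‖C‖ := by
    have hq : ‖q ^ n‖ ≤ 1 := by
      rw [norm_pow]
      exact pow_le_one₀ (norm_nonneg _) hq1.le
    calc ‖A * q ^ n + C‖ ≤ ‖A‖ * ‖q ^ n‖ + ‖C‖ := (norm_add_le _ _).trans (by rw [norm_mul])
      _ ≤ ‖A‖ + ‖C‖ := by gcongr; exact mul_le_of_le_one_right (norm_nonneg _) hq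
  have hrec' (n : ℕ) : ((n : ℂ) + 1) * a (n + 1) =
      (A * q ^ n + C) * a n + ∑ p ∈ antidiagonal n, a p.1 * a p.2 := by
    rcases n with _ | n
    · simp only [Nat.cast_zero, zero_add, one_mul, pow_zero, mul_one,
        HasAntidiagonal.antidiagonal_zero, sum_singleton, h1]
      ring
    · rw [hrec (n + 1) (by omega)]
      ring
  exact norm_le_pow_of_riccati_recursion hb hrec' ha0

/-- If `0 < |q| < 1`, `(a n)` satisfies `a₁ = a₀² + (A+C) a₀` and
`(n+1) a_{n+1} = A qⁿ a_n + Σ_{i+j=n} a_i a_j + C a_n` for all `n ≥ 1`, and `|a₀| ≤ 1`,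
then `|a_n| ≤ (|A| + |C| + 1)ⁿ` for all `n`. -/
theorem stmt13 (A C q : ℂ) (hq0 : 0 < ‖q‖) (hq1 : ‖q‖ < 1)
    (a : ℕ → ℂ)
    (h1 : a 1 = (a 0) ^ 2 + (A + C) * a 0)
    (hrec : ∀ n : ℕ, 1 ≤ n →
      ((n : ℂ) + 1) * a (n + 1) =
        A * q ^ n * a n + (∑ p ∈ Finset.HasAntidiagonal.antidiagonal n, a p.1 * a p.2) + C * a n)
    (ha0 : ‖a 0‖ ≤ 1) :
    ∀ n : ℕ, ‖a n‖ ≤ (‖A‖ + ‖C‖ + 1) ^ n :=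
  stmt13_general A C q hq1 a h1 hrec ha0
end

section
/- Let A, B, C, D, q ∈ ℂ with A ≠ 0, B ≠ 0, q ≠ 0 and |q| ≠ 1. Let f be meromorphic on ℂ and satisfy f'(z) = A·f(qz) + B·f(z)^2 + C·f(z) + D at every point z at which f is analytic at both z and qz. If f has a pole of order t ≥ 2 at some point z₀ ≠ 0, then for every n ≥ 1, f has a pole of order 2^n·t at the point q^n·z₀. -/
/-!
Near a pole `w` of order `m` the equation gives `f (q z) = (f' z - B f z ^ 2 - C f z - D) / A`.
For `m ≥ 2` the term `B f²`, of order `-2m`, strictly dominates `f'` (order `-m - 1`), `C f` and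
`D`, so `f` has a pole of order `2m` at `q w`; induction on `n` gives the poles at `qⁿ z₀`.
-/

open Filter Topology

section

variable {𝕜 : Type*} [NontriviallyNormedField 𝕜] [CompleteSpace 𝕜] [CharZero 𝕜]

theorem meromorphicOrderAt_comp_const_mul {E : Type*} [NormedAddCommGroup E] [NormedSpace 𝕜 E]
    {f : 𝕜 → E} {q : 𝕜} (hq : q ≠ 0) (x : 𝕜) :
    meromorphicOrderAt (fun z => f (q * z)) x = meromorphicOrderAt f (q * x) :=
  meromorphicOrderAt_comp_of_deriv_ne_zero (g := (q * ·)) (by fun_prop) (by simpa using hq)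

theorem meromorphicOrderAt_deriv_sub_mul_sq {f : 𝕜 → 𝕜} {w B : 𝕜} {m : ℕ} (C D : 𝕜)
    (hB : B ≠ 0) (hm : 2 ≤ m) (hf : meromorphicOrderAt f w = (-m : ℤ)) :
    meromorphicOrderAt (fun z => deriv f z - B * f z ^ 2 - C * f z - D) w = (-(2 * m) : ℤ) := by
  have hfw : MeromorphicAt f w :=
    meromorphicAt_of_meromorphicOrderAt_ne_zero (by rw [hf]; norm_cast; omega)
  have hsq : meromorphicOrderAt (fun z => -(B * f z ^ 2)) w = (-(2 * m) : ℤ) := by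
    rw [← meromorphicOrderAt_fun_neg,
      show (fun z => B * f z ^ 2) = (fun _ => B) * f ^ 2 from rfl,
      meromorphicOrderAt_mul_of_ne_zero analyticAt_const hB, meromorphicOrderAt_pow hfw, hf]
    rw [← WithTop.coe_natCast, ← WithTop.coe_mul]
    congr 1
    push_cast
    ring
  have hrest : ((-(2 * m) : ℤ) : WithTop ℤ) <
      meromorphicOrderAt (deriv f + ((fun _ => -C) * f) + fun _ => -D) w := by
    have hderiv : meromorphicOrderAt (deriv f) w = (-m - 1 : ℤ) :=
      meromorphicOrderAt_deriv_eq_sub_one (by norm_cast; omega) hf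
    have hlin : ((-m : ℤ) : WithTop ℤ) ≤ meromorphicOrderAt ((fun _ => -C) * f) w := by
      rw [meromorphicOrderAt_mul (by fun_prop) hfw, hf]
      exact le_add_of_nonneg_left analyticAt_const.meromorphicOrderAt_nonneg
    calc ((-(2 * m) : ℤ) : WithTop ℤ)
        < min (min (meromorphicOrderAt (deriv f) w) (meromorphicOrderAt ((fun _ => -C) * f) w))
            (meromorphicOrderAt (fun _ => -D) w) := by
          refine lt_min (lt_min ?_ ?_) ?_
          · rw [hderiv]; norm_cast; omega
          · exact lt_of_lt_of_le (by norm_cast; omega) hlin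
          · exact lt_of_lt_of_le (by norm_cast; omega) analyticAt_const.meromorphicOrderAt_nonneg
      _ ≤ min (meromorphicOrderAt (deriv f + (fun _ => -C) * f) w)
            (meromorphicOrderAt (fun _ => -D) w) :=
          min_le_min_right _ (meromorphicOrderAt_add hfw.deriv (by fun_prop))
      _ ≤ _ := meromorphicOrderAt_add (hfw.deriv.add (by fun_prop)) (by fun_prop)
  have hsplit : (fun z => deriv f z - B * f z ^ 2 - C * f z - D) =
      (fun z => -(B * f z ^ 2)) + (deriv f + ((fun _ => -C) * f) + fun _ => -D) := by
    funext z
    simp only [Pi.add_apply, Pi.mul_apply]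
    ring
  rw [hsplit, meromorphicOrderAt_add_eq_left_of_lt (by fun_prop) (hsq ▸ hrest), hsq]

theorem meromorphicOrderAt_mul_eq_neg_two_mul {A B C D q w : 𝕜} {f : 𝕜 → 𝕜} {m : ℕ}
    (hA : A ≠ 0) (hB : B ≠ 0) (hq : q ≠ 0) (hfq : MeromorphicAt f (q * w))
    (heq : ∀ z, AnalyticAt 𝕜 f z → AnalyticAt 𝕜 f (q * z) →
      deriv f z = A * f (q * z) + B * f z ^ 2 + C * f z + D)
    (hm : 2 ≤ m) (hf : meromorphicOrderAt f w = (-m : ℤ)) :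
    meromorphicOrderAt f (q * w) = (-(2 * m) : ℤ) := by
  have hfw : MeromorphicAt f w :=
    meromorphicAt_of_meromorphicOrderAt_ne_zero (by rw [hf]; norm_cast; omega)
  have hmul : Tendsto (q * ·) (𝓝[≠] w) (𝓝[≠] (q * w)) :=
    ((Homeomorph.mulLeft₀ q hq).map_punctured_nhds_eq w).le
  have hsolve : (fun z => f (q * z)) =ᶠ[𝓝[≠] w]
      (fun _ => A⁻¹) * fun z => deriv f z - B * f z ^ 2 - C * f z - D := by
    filter_upwards [hfw.eventually_analyticAt, hmul.eventually hfq.eventually_analyticAt]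
      with z hz hqz
    rw [Pi.mul_apply, heq z hz hqz]
    field_simp
    ring
  rw [← meromorphicOrderAt_comp_const_mul hq, meromorphicOrderAt_congr hsolve,
    meromorphicOrderAt_mul_of_ne_zero analyticAt_const (inv_ne_zero hA),
    meromorphicOrderAt_deriv_sub_mul_sq C D hB hm hf]

end

theorem stmt15_general (A B C D q : ℂ) (hA : A ≠ 0) (hB : B ≠ 0) (hq0 : q ≠ 0)
    (f : ℂ → ℂ) (hf : ∀ z : ℂ, MeromorphicAt f z)
    (heq : ∀ z : ℂ, AnalyticAt ℂ f z → AnalyticAt ℂ f (q * z) →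
      deriv f z = A * f (q * z) + B * (f z) ^ 2 + C * f z + D)
    (z₀ : ℂ) (t : ℕ) (ht : 2 ≤ t)
    (hpole : meromorphicOrderAt f z₀ = (-(t : ℤ) : ℤ)) :
    ∀ n : ℕ, 1 ≤ n → meromorphicOrderAt f (q ^ n * z₀) = (-(2 ^ n * t : ℤ) : ℤ) := by
  have hpow : ∀ n : ℕ, meromorphicOrderAt f (q ^ n * z₀) = (-((2 ^ n * t : ℕ) : ℤ) : ℤ) := by
    intro n
    induction n with
    | zero => simpa using hpole
    | succ n ih =>
      have hstep := meromorphicOrderAt_mul_eq_neg_two_mul hA hB hq0 (hf _) heq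
        (ht.trans (Nat.le_mul_of_pos_left t (by positivity))) ih
      rw [pow_succ', mul_assoc, pow_succ', mul_assoc]
      exact_mod_cast hstep
  intro n _
  simpa using hpow n

/-- For `A ≠ 0`, `B ≠ 0`, `q ≠ 0`, `|q| ≠ 1`: if a meromorphic solution
of `f'(z) = A f(qz) + B f(z)² + C f(z) + D` has a pole of order `t ≥ 2` at `z₀ ≠ 0`,
then for every `n ≥ 1` it has a pole of order `2ⁿ t` at `qⁿ z₀`. -/
theorem stmt15 (A B C D q : ℂ) (hA : A ≠ 0) (hB : B ≠ 0) (hq0 : q ≠ 0)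
    (hq1 : ‖q‖ ≠ 1)
    (f : ℂ → ℂ) (hf : ∀ z : ℂ, MeromorphicAt f z)
    (heq : ∀ z : ℂ, AnalyticAt ℂ f z → AnalyticAt ℂ f (q * z) →
      deriv f z = A * f (q * z) + B * (f z) ^ 2 + C * f z + D)
    (z₀ : ℂ) (hz₀ : z₀ ≠ 0) (t : ℕ) (ht : 2 ≤ t)
    (hpole : meromorphicOrderAt f z₀ = (-(t : ℤ) : ℤ)) :
    ∀ n : ℕ, 1 ≤ n → meromorphicOrderAt f (q ^ n * z₀) = (-(2 ^ n * t : ℤ) : ℤ) :=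
  stmt15_general A B C D q hA hB hq0 f hf heq z₀ t ht hpole
end

section
/- Let A, B, C, D, q ∈ ℂ with B ≠ 0 and q ≠ 0. Suppose f is meromorphic on ℂ, satisfies f'(z) = A·f(qz) + B·f(z)^2 + C·f(z) + D at every point z at which f is analytic at both z and qz, and has a simple pole at z = 0, with Laurent expansion f(z) = c_{−1}/z + c_0 + c_1·z + ⋯ near 0. Then c_{−1} = −1/B and c_0 = −(A/q + C)/(2B). -/
open Filter Topology

/-- For `B ≠ 0`, `q ≠ 0`: if a meromorphic solution of
`f'(z) = A f(qz) + B f(z)² + C f(z) + D` has a simple pole at `0`, with Laurent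
expansion `f(z) = cm1/z + g(z)` near `0` (`g` analytic at `0`, `cm1 ≠ 0`,
`c0 = g 0`), then `cm1 = -1/B` and `c0 = -(A/q + C)/(2B)`. -/
theorem stmt16 (A B C D q : ℂ) (hB : B ≠ 0) (hq : q ≠ 0)
    (f : ℂ → ℂ) (hf : ∀ z : ℂ, MeromorphicAt f z)
    (heq : ∀ z : ℂ, AnalyticAt ℂ f z → AnalyticAt ℂ f (q * z) →
      deriv f z = A * f (q * z) + B * (f z) ^ 2 + C * f z + D)
    (cm1 c0 : ℂ) (hcm1 : cm1 ≠ 0) (g : ℂ → ℂ) (hg : AnalyticAt ℂ g 0) (hc0 : c0 = g 0)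
    (hLaurent : ∀ᶠ z in 𝓝[≠] (0 : ℂ), f z = cm1 / z + g z) :
    cm1 = -1 / B ∧ c0 = -(A / q + C) / (2 * B) := by
  -- derivative of g is analytic (hence continuous) at 0
  have hgOn : AnalyticOnNhd ℂ g {(0 : ℂ)} := fun y hy => by
    rw [Set.mem_singleton_iff] at hy; rwa [hy]
  have hdg : AnalyticAt ℂ (deriv g) 0 := hgOn.deriv 0 rfl
  -- obtain an open set on which everything works
  obtain ⟨u, hu_open, hu0, hu_sub⟩ := mem_nhdsWithin.mp hLaurent
  obtain ⟨v, hv_sub, hv_open, hv0⟩ := mem_nhds_iff.mp hg.eventually_analyticAt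
  set w : Set ℂ := u ∩ v with hw
  have hw_open : IsOpen w := hu_open.inter hv_open
  have hw0 : (0 : ℂ) ∈ w := ⟨hu0, hv0⟩
  have hwLaurent : ∀ z ∈ w, z ≠ 0 → f z = cm1 / z + g z := fun z hz hz0 =>
    hu_sub ⟨hz.1, hz0⟩
  have hwg : ∀ z ∈ w, AnalyticAt ℂ g z := fun z hz => hv_sub hz.2
  -- properties at points of w \ {0}
  have hkey : ∀ z ∈ w, z ≠ 0 →
      AnalyticAt ℂ f z ∧
        deriv f z = cm1 * (-(z ^ 2)⁻¹) + deriv g z ∧ f z = cm1 / z + g z := by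
    intro z hz hz0
    have hev : f =ᶠ[𝓝 z] fun y => cm1 / y + g y := by
      filter_upwards [hw_open.mem_nhds hz,
        (isOpen_compl_singleton (x := (0 : ℂ))).mem_nhds hz0] with y hy hy0
      exact hwLaurent y hy hy0
    have han : AnalyticAt ℂ (fun y => cm1 / y + g y) z :=
      ((analyticAt_const.div (analyticAt_id) hz0)).add (hwg z hz)
    have hder : HasDerivAt (fun y => cm1 / y + g y)
        (cm1 * (-(z ^ 2)⁻¹) + deriv g z) z := by
      have h1 : HasDerivAt (fun y : ℂ => cm1 / y) (cm1 * (-(z ^ 2)⁻¹)) z := by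
        simpa [div_eq_mul_inv] using (hasDerivAt_inv hz0).const_mul cm1
      exact h1.add ((hwg z hz).differentiableAt.hasDerivAt)
    refine ⟨han.congr hev.symm, ?_, hwLaurent z hz hz0⟩
    rw [hev.deriv_eq]
    exact hder.deriv
  -- the function Ψ, continuous at 0, equal to -cm1 on a punctured nbhd of 0
  set Ψ : ℂ → ℂ := fun z => A * cm1 * q⁻¹ * z + A * (z ^ 2 * g (q * z)) + B * cm1 ^ 2
      + 2 * B * cm1 * (z * g z) + B * (z ^ 2 * g z ^ 2) + C * cm1 * z
      + C * (z ^ 2 * g z) + D * z ^ 2 - z ^ 2 * deriv g z with hΨ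
  have hqz_tendsto : Tendsto (fun z : ℂ => q * z) (𝓝[≠] 0) (𝓝[≠] 0) := by
    rw [tendsto_nhdsWithin_iff]
    constructor
    · have : Tendsto (fun z : ℂ => q * z) (𝓝 0) (𝓝 (q * 0)) :=
        (continuous_const.mul continuous_id).tendsto 0
      simpa using this.mono_left nhdsWithin_le_nhds
    · filter_upwards [self_mem_nhdsWithin] with z hz
      exact Set.mem_compl_singleton_iff.mpr (mul_ne_zero hq hz)
  have hwmem : ∀ᶠ z in 𝓝[≠] (0 : ℂ), z ∈ w :=
    eventually_nhdsWithin_of_eventually_nhds (hw_open.eventually_mem hw0)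
  have hqwmem : ∀ᶠ z in 𝓝[≠] (0 : ℂ), q * z ∈ w ∧ q * z ≠ 0 := by
    have := hqz_tendsto.eventually (hwmem.and self_mem_nhdsWithin)
    simpa using this
  have hΨev : ∀ᶠ z in 𝓝[≠] (0 : ℂ), Ψ z = -cm1 := by
    filter_upwards [hwmem, hqwmem, self_mem_nhdsWithin] with z hzw hqzw hz0
    obtain ⟨hfz_an, hfz_der, hfz_eq⟩ := hkey z hzw hz0
    obtain ⟨hfqz_an, -, hfqz_eq⟩ := hkey (q * z) hqzw.1 hqzw.2
    have hE := heq z hfz_an hfqz_an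
    rw [hfz_der, hfz_eq, hfqz_eq] at hE
    have hzne : (z : ℂ) ≠ 0 := hz0
    have hqzne : q * z ≠ 0 := mul_ne_zero hq hzne
    have hrep : Ψ z = z ^ 2 * (A * (cm1 / (q * z) + g (q * z))
        + B * (cm1 / z + g z) ^ 2 + C * (cm1 / z + g z) + D) - z ^ 2 * deriv g z := by
      rw [hΨ]
      field_simp
      ring
    rw [hrep, ← hE]
    field_simp
    ring
  -- continuity helpers at 0
  have hgc : ContinuousAt g 0 := hg.continuousAt
  have hmc : ContinuousAt (fun z : ℂ => q * z) 0 :=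
    (continuous_const.mul continuous_id).continuousAt
  have hgqc : ContinuousAt (fun z : ℂ => g (q * z)) 0 := by
    have h0 : ContinuousAt g (q * 0) := by rw [mul_zero]; exact hgc
    exact h0.comp hmc
  have hdgc : ContinuousAt (deriv g) 0 := hdg.continuousAt
  have hΨcont : ContinuousAt Ψ 0 := by
    rw [hΨ]
    exact (((((((((continuousAt_const.mul continuousAt_id).add
      (continuousAt_const.mul ((continuousAt_id.pow 2).mul hgqc))).add
      continuousAt_const).add
      (continuousAt_const.mul (continuousAt_id.mul hgc))).add
      (continuousAt_const.mul ((continuousAt_id.pow 2).mul (hgc.pow 2)))).add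
      (continuousAt_const.mul continuousAt_id)).add
      (continuousAt_const.mul ((continuousAt_id.pow 2).mul hgc))).add
      (continuousAt_const.mul (continuousAt_id.pow 2))).sub
      ((continuousAt_id.pow 2).mul hdgc))
  have hΨ0 : Ψ 0 = B * cm1 ^ 2 := by rw [hΨ]; simp
  -- first limit: B * cm1 ^ 2 = -cm1
  have h1 : B * cm1 ^ 2 = -cm1 := by
    have t1 : Tendsto Ψ (𝓝[≠] (0 : ℂ)) (𝓝 (B * cm1 ^ 2)) := by
      rw [← hΨ0]
      exact hΨcont.continuousWithinAt
    have t2 : Tendsto Ψ (𝓝[≠] (0 : ℂ)) (𝓝 (-cm1)) := by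
      refine Tendsto.congr' ?_ (tendsto_const_nhds (α := ℂ) (f := 𝓝[≠] (0 : ℂ)))
      filter_upwards [hΨev] with z hz
      exact hz.symm
    exact tendsto_nhds_unique t1 t2
  have hBc : B * cm1 = -1 := by
    have h2 : (B * cm1) * cm1 = (-1) * cm1 := by linear_combination h1
    exact mul_right_cancel₀ hcm1 h2
  have hcm1B : cm1 = -1 / B := by
    rw [eq_div_iff hB]
    linear_combination hBc
  -- second function Ξ
  set Ξ : ℂ → ℂ := fun z => A * cm1 * q⁻¹ + A * (z * g (q * z)) + 2 * B * cm1 * g z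
      + B * (z * g z ^ 2) + C * cm1 + C * (z * g z) + D * z - z * deriv g z with hΞ
  have hΞev : ∀ᶠ z in 𝓝[≠] (0 : ℂ), Ξ z = 0 := by
    filter_upwards [hΨev, self_mem_nhdsWithin] with z hz hz0
    have hzne : (z : ℂ) ≠ 0 := hz0
    have hmul : z * Ξ z = Ψ z - B * cm1 ^ 2 := by rw [hΞ, hΨ]; ring
    rw [hz, h1] at hmul
    have hz2 : z * Ξ z = 0 := by rw [hmul]; ring
    exact (mul_eq_zero.mp hz2).resolve_left hzne
  have hΞcont : ContinuousAt Ξ 0 := by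
    rw [hΞ]
    exact (((((((continuousAt_const.add
      (continuousAt_const.mul (continuousAt_id.mul hgqc))).add
      (continuousAt_const.mul hgc)).add
      (continuousAt_const.mul (continuousAt_id.mul (hgc.pow 2)))).add
      continuousAt_const).add
      (continuousAt_const.mul (continuousAt_id.mul hgc))).add
      (continuousAt_const.mul continuousAt_id)).sub
      (continuousAt_id.mul hdgc))
  have hΞ0 : Ξ 0 = A * cm1 * q⁻¹ + 2 * B * cm1 * g 0 + C * cm1 := by rw [hΞ]; simp
  have h2 : A * cm1 * q⁻¹ + 2 * B * cm1 * g 0 + C * cm1 = 0 := by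
    have t1 : Tendsto Ξ (𝓝[≠] (0 : ℂ)) (𝓝 (A * cm1 * q⁻¹ + 2 * B * cm1 * g 0 + C * cm1)) := by
      rw [← hΞ0]
      exact hΞcont.continuousWithinAt
    have t2 : Tendsto Ξ (𝓝[≠] (0 : ℂ)) (𝓝 0) := by
      refine Tendsto.congr' ?_ (tendsto_const_nhds (α := ℂ) (f := 𝓝[≠] (0 : ℂ)))
      filter_upwards [hΞev] with z hz
      exact hz.symm
    exact tendsto_nhds_unique t1 t2
  have h3 : A * q⁻¹ + 2 * B * g 0 + C = 0 := by
    have h4 : cm1 * (A * q⁻¹ + 2 * B * g 0 + C) = 0 := by linear_combination h2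
    exact (mul_eq_zero.mp h4).resolve_left hcm1
  refine ⟨hcm1B, ?_⟩
  rw [hc0, eq_div_iff (mul_ne_zero two_ne_zero hB)]
  linear_combination h3
end

section
/- Let A, B, C, D, q ∈ ℂ with q ≠ 0. If f and g are entire functions, each satisfying h'(z) = A·h(qz) + B·h(z)^2 + C·h(z) + D for all z ∈ ℂ, and f(0) = g(0), then f = g. In other words, an entire solution of (†) is uniquely determined by its value at the origin. -/
/-!
The difference `h = f - g` of two solutions satisfies the linear equation
`h'(z) = A h(qz) + v(z) h(z)` with `v = B (f + g) + C`, since `B f² - B g² = B (f + g) h`.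
Starting from `h(0) = 0`, strong induction shows that every derivative of `h` vanishes
at `0`: the `m`-th derivative of `z ↦ h(qz)` at `0` is `q^m h⁽ᵐ⁾(0)`, and by the Leibniz rule
that of `v h` involves only `h⁽ᵏ⁾(0)` with `k ≤ m`. An entire function is its Taylor series at `0`,
so `h = 0`.
-/

open scoped ContDiff

section IteratedDeriv

variable {𝕜 : Type*} [NontriviallyNormedField 𝕜]

theorem iteratedDeriv_fun_mul_eq_zero_of_forall_le {𝔸 : Type*} [NormedRing 𝔸]
    [NormedAlgebra 𝕜 𝔸] {n : ℕ} {x : 𝕜} {v h : 𝕜 → 𝔸}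
    (hv : ContDiffAt 𝕜 n v x) (hh : ContDiffAt 𝕜 n h x)
    (hzero : ∀ k ≤ n, iteratedDeriv k h x = 0) :
    iteratedDeriv n (fun z => v z * h z) x = 0 := by
  rw [iteratedDeriv_fun_mul hv hh]
  exact Finset.sum_eq_zero fun i _ => by rw [hzero (n - i) (Nat.sub_le n i), mul_zero]

theorem iteratedDeriv_eq_zero_at_zero_of_deriv_eq {A q : 𝕜} {v h : 𝕜 → 𝕜}
    (hv : ContDiff 𝕜 ∞ v) (hh : ContDiff 𝕜 ∞ h)
    (hderiv : deriv h = fun z => A * h (q * z) + v z * h z) (h0 : h 0 = 0) (n : ℕ) :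
    iteratedDeriv n h 0 = 0 := by
  induction n using Nat.strong_induction_on with
  | _ n ih =>
    cases n with
    | zero => simpa using h0
    | succ m =>
      have hv' : ContDiff 𝕜 m v := hv.of_le (by exact_mod_cast le_top)
      have hh' : ContDiff 𝕜 m h := hh.of_le (by exact_mod_cast le_top)
      have hrescaled : iteratedDeriv m (fun z => h (q * z)) 0 = 0 := by
        rw [congrFun (iteratedDeriv_comp_const_mul hh' q) 0, mul_zero, ih m m.lt_succ_self,
          mul_zero]
      have hproduct : iteratedDeriv m (fun z => v z * h z) 0 = 0 :=
        iteratedDeriv_fun_mul_eq_zero_of_forall_le hv'.contDiffAt hh'.contDiffAt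
          fun k hk => ih k (Nat.lt_succ_of_le hk)
      have hrescaled_smooth : ContDiff 𝕜 m fun z => A * h (q * z) := by fun_prop
      rw [iteratedDeriv_succ', hderiv,
        iteratedDeriv_fun_add hrescaled_smooth.contDiffAt (hv'.mul hh').contDiffAt,
        iteratedDeriv_const_mul_field, hrescaled, hproduct, mul_zero, add_zero]

end IteratedDeriv

theorem Complex.eq_zero_of_iteratedDeriv_eq_zero {E : Type*} [NormedAddCommGroup E]
    [NormedSpace ℂ E] [CompleteSpace E] {h : ℂ → E} (hh : Differentiable ℂ h) (c : ℂ)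
    (hzero : ∀ n, iteratedDeriv n h c = 0) : h = 0 := by
  funext z
  rw [← Complex.taylorSeries_eq_of_entire hh c z]
  simp [hzero]

theorem stmt17_general (A B C D q : ℂ)
    (f g : ℂ → ℂ) (hf : Differentiable ℂ f) (hg : Differentiable ℂ g)
    (heqf : ∀ z : ℂ, deriv f z = A * f (q * z) + B * (f z) ^ 2 + C * f z + D)
    (heqg : ∀ z : ℂ, deriv g z = A * g (q * z) + B * (g z) ^ 2 + C * g z + D)
    (h0 : f 0 = g 0) :
    f = g := by
  have hdiff : Differentiable ℂ (f - g) := hf.sub hg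
  have hcoeff : Differentiable ℂ fun z => B * (f z + g z) + C :=
    ((hf.add hg).const_mul B).add_const C
  have hlinear :
      deriv (f - g) = fun z => A * (f - g) (q * z) + (B * (f z + g z) + C) * (f - g) z := by
    funext z
    rw [deriv_sub (hf z) (hg z), heqf, heqg, Pi.sub_apply, Pi.sub_apply]
    ring
  have hvanish := iteratedDeriv_eq_zero_at_zero_of_deriv_eq hcoeff.contDiff hdiff.contDiff hlinear
    (by rw [Pi.sub_apply, h0, sub_self])
  exact sub_eq_zero.mp (Complex.eq_zero_of_iteratedDeriv_eq_zero hdiff 0 hvanish)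

/-- For `q ≠ 0`: two entire solutions of
`h'(z) = A h(qz) + B h(z)² + C h(z) + D` which agree at the origin are equal. -/
theorem stmt17 (A B C D q : ℂ) (hq : q ≠ 0)
    (f g : ℂ → ℂ) (hf : Differentiable ℂ f) (hg : Differentiable ℂ g)
    (heqf : ∀ z : ℂ, deriv f z = A * f (q * z) + B * (f z) ^ 2 + C * f z + D)
    (heqg : ∀ z : ℂ, deriv g z = A * g (q * z) + B * (g z) ^ 2 + C * g z + D)
    (h0 : f 0 = g 0) :
    f = g :=
  stmt17_general A B C D q f g hf hg heqf heqg h0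
end

section
/- Let A, C, D, q ∈ ℂ with A ≠ 0, q ≠ 0 and |q| ≠ 1. Let f be meromorphic on ℂ and satisfy f'(z) = A·f(qz) + C·f(z) + D at every point z at which f is analytic at both z and qz. If f has a pole of order t ≥ 1 at some point z₀ ≠ 0, then for every n ≥ 1, f has a pole of order t + n at the point q^n·z₀. -/
/-!
Near a pole `w` of order `s ≥ 1`, `f'` has a pole of order `s + 1` while `C f + D` has a pole of
order at most `s`. Hence `A f(qz) = f'(z) - C f(z) - D` forces `z ↦ f(qz)` to have a pole of order
`s + 1` at `w`, i.e. `f` has a pole of order `s + 1` at `qw`; iterate along the orbit `qⁿ z₀`.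
-/

open Filter Topology

theorem meromorphicOrderAt_comp_const_mul_s19 {f : ℂ → ℂ} {c : ℂ} (hc : c ≠ 0) (x : ℂ) :
    meromorphicOrderAt (fun z ↦ f (c * z)) x = meromorphicOrderAt f (c * x) :=
  meromorphicOrderAt_comp_of_deriv_ne_zero (f := f) (g := (c * ·)) (by fun_prop)
    (by simpa using hc)

theorem min_le_meromorphicOrderAt_const_mul_add_const {f : ℂ → ℂ} {x : ℂ}
    (hf : MeromorphicAt f x) (C D : ℂ) :
    min (meromorphicOrderAt f x) 0 ≤ meromorphicOrderAt (fun z ↦ C * f z + D) x := by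
  classical
  have hCf : meromorphicOrderAt f x ≤ meromorphicOrderAt ((fun _ ↦ C) * f) x := by
    rw [meromorphicOrderAt_mul (MeromorphicAt.const C x) hf, meromorphicOrderAt_const]
    split_ifs <;> simp
  have hD : (0 : WithTop ℤ) ≤ meromorphicOrderAt (fun _ ↦ D) x := by
    rw [meromorphicOrderAt_const]; split_ifs <;> simp
  exact (min_le_min hCf hD).trans
    (meromorphicOrderAt_add (by fun_prop) (MeromorphicAt.const D x))

theorem deriv_eventuallyEq_of_functional_eq {A C D q : ℂ} (hq : q ≠ 0) {f : ℂ → ℂ}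
    (heq : ∀ z : ℂ, AnalyticAt ℂ f z → AnalyticAt ℂ f (q * z) →
      deriv f z = A * f (q * z) + C * f z + D)
    {w : ℂ} (hw : MeromorphicAt f w) (hqw : MeromorphicAt f (q * w)) :
    deriv f =ᶠ[𝓝[≠] w] fun z ↦ A * f (q * z) + C * f z + D := by
  have hmul : Tendsto (q * ·) (𝓝[≠] w) (𝓝[≠] (q * w)) := by
    simpa using ((hasDerivAt_id w).const_mul q).tendsto_nhdsNE (by simpa using hq)
  filter_upwards [hw.eventually_analyticAt, hmul.eventually hqw.eventually_analyticAt]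
    with z hz hqz using heq z hz hqz

theorem meromorphicOrderAt_mul_left_eq_sub_one {A C D q : ℂ} (hA : A ≠ 0) (hq : q ≠ 0)
    {f : ℂ → ℂ}
    (heq : ∀ z : ℂ, AnalyticAt ℂ f z → AnalyticAt ℂ f (q * z) →
      deriv f z = A * f (q * z) + C * f z + D)
    {w : ℂ} (hw : MeromorphicAt f w) (hqw : MeromorphicAt f (q * w)) {n : ℤ} (hn : n < 0)
    (hpole : meromorphicOrderAt f w = n) :
    meromorphicOrderAt f (q * w) = ↑(n - 1) := by
  have hderiv : meromorphicOrderAt (deriv f) w = ↑(n - 1) :=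
    meromorphicOrderAt_deriv_eq_sub_one (by exact_mod_cast hn.ne) hpole
  have hlow : meromorphicOrderAt (deriv f) w < meromorphicOrderAt (fun z ↦ -(C * f z + D)) w := by
    rw [hderiv, ← meromorphicOrderAt_fun_neg]
    refine lt_of_lt_of_le ?_ (min_le_meromorphicOrderAt_const_mul_add_const hw C D)
    rw [hpole, ← WithTop.coe_zero, ← WithTop.coe_min, WithTop.coe_lt_coe]
    omega
  have hcomp : (fun z ↦ f (q * z)) =ᶠ[𝓝[≠] w]
      (fun _ ↦ A⁻¹) * (deriv f + fun z ↦ -(C * f z + D)) := by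
    filter_upwards [deriv_eventuallyEq_of_functional_eq hq heq hw hqw] with z hz
    simp only [Pi.mul_apply, Pi.add_apply, hz]
    field_simp
    ring
  rw [← meromorphicOrderAt_comp_const_mul_s19 hq, meromorphicOrderAt_congr hcomp,
    meromorphicOrderAt_mul_of_ne_zero analyticAt_const (inv_ne_zero hA),
    meromorphicOrderAt_add_eq_left_of_lt (by fun_prop) hlow, hderiv]

theorem stmt19_general (A C D q : ℂ) (hA : A ≠ 0) (hq0 : q ≠ 0)
    (f : ℂ → ℂ) (hf : ∀ z : ℂ, MeromorphicAt f z)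
    (heq : ∀ z : ℂ, AnalyticAt ℂ f z → AnalyticAt ℂ f (q * z) →
      deriv f z = A * f (q * z) + C * f z + D)
    (z₀ : ℂ) (t : ℕ) (ht : 1 ≤ t)
    (hpole : meromorphicOrderAt f z₀ = (-(t : ℤ) : ℤ)) :
    ∀ n : ℕ, 1 ≤ n → meromorphicOrderAt f (q ^ n * z₀) = (-((t : ℤ) + (n : ℤ)) : ℤ) := by
  suffices h : ∀ n : ℕ, meromorphicOrderAt f (q ^ n * z₀) = (-((t : ℤ) + (n : ℤ)) : ℤ) from
    fun n _ ↦ h n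
  intro n
  induction n with
  | zero => simpa using hpole
  | succ n ih =>
    rw [pow_succ', mul_assoc,
      meromorphicOrderAt_mul_left_eq_sub_one hA hq0 heq (hf _) (hf _) (by omega) ih]
    congr 1
    omega

/-- For `A ≠ 0`, `q ≠ 0`, `|q| ≠ 1`: if a meromorphic solution of
`f'(z) = A f(qz) + C f(z) + D` has a pole of order `t ≥ 1` at `z₀ ≠ 0`, then for every
`n ≥ 1` it has a pole of order `t + n` at `qⁿ z₀`. -/
theorem stmt19 (A C D q : ℂ) (hA : A ≠ 0) (hq0 : q ≠ 0) (hq1 : ‖q‖ ≠ 1)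
    (f : ℂ → ℂ) (hf : ∀ z : ℂ, MeromorphicAt f z)
    (heq : ∀ z : ℂ, AnalyticAt ℂ f z → AnalyticAt ℂ f (q * z) →
      deriv f z = A * f (q * z) + C * f z + D)
    (z₀ : ℂ) (hz₀ : z₀ ≠ 0) (t : ℕ) (ht : 1 ≤ t)
    (hpole : meromorphicOrderAt f z₀ = (-(t : ℤ) : ℤ)) :
    ∀ n : ℕ, 1 ≤ n → meromorphicOrderAt f (q ^ n * z₀) = (-((t : ℤ) + (n : ℤ)) : ℤ) :=
  stmt19_general A C D q hA hq0 f hf heq z₀ t ht hpole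
end
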